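/- For every integer r ≥ 3, for every maximum matching M of the graph G_{2r+1} there exist two distinct M-unsaturated vertices that have a common neighbor. -/

import Mathlib

/-- A matching `M` of `G` is maximum if no matching of `G` has more edges. -/
def SimpleGraph.IsMaximumMatching {α : Type*} (G : SimpleGraph α) (M : G.Subgraph) : Prop :=
  M.IsMatching ∧ ∀ M' : G.Subgraph, M'.IsMatching → M'.edgeSet.ncard ≤ M.edgeSet.ncard

/-- The (underlying simple) graph `G_n` of the paper (used with `n = 2r + 1`):
the vertices `x, y, z` are encoded as `Sum.inl 0, Sum.inl 1, Sum.inl 2`, the vertex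
`v_{k+1}^{(i)}` is encoded as `Sum.inr (k, i)`; `x` is joined to every `v_1^{(i)}`,
`y` to every `v_2^{(i)}`, `z` to every `v_3^{(i)}`, and for each `i` the vertices
`v_1^{(i)}, v_2^{(i)}, v_3^{(i)}` form a triangle. -/
def GGraph (n : ℕ) : SimpleGraph (Fin 3 ⊕ Fin 3 × Fin n) where
  Adj a b :=
    match a, b with
    | .inl k, .inr p => p.1 = k
    | .inr p, .inl k => p.1 = k
    | .inr p, .inr q => p.2 = q.2 ∧ p.1 ≠ q.1
    | _, _ => False
  symm := by
    constructor
    rintro (k | p) (k' | q) h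
    · exact h
    · exact h
    · exact h
    · exact ⟨h.1.symm, h.2.symm⟩
  loopless := by
    constructor
    rintro (k | p) h
    · exact h
    · exact h.2 rfl

/-! Each hub `inl k` is matched to at most one triangle vertex, and a triangle all of whose
vertices are matched must send one of them to its hub, since an odd set cannot be matched within
itself. Hence at most three of the `n` triangles are fully matched, at least `n - 3 ≥ 4` triangle
vertices are unmatched, and two of them, in different triangles, have the same type `k`: their
common neighbour is the hub `inl k`. -/

theorem Fin.exists_apply_eq_self_of_involutive_three (f : Fin 3 → Fin 3)
    (hf : Function.Involutive f) : ∃ k, f k = k := by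
  revert f
  unfold Function.Involutive
  decide

namespace GGraph

open Finset Classical

variable {n : ℕ} {M : (GGraph n).Subgraph}

theorem exists_adj_hub_of_forall_saturated (hM : M.IsMatching) (i : Fin n)
    (hsat : ∀ k, ∃ c, M.Adj (.inr (k, i)) c) : ∃ k, M.Adj (.inr (k, i)) (.inl k) := by
  by_contra! hhub
  have partner : ∀ k, ∃ k', M.Adj (.inr (k, i)) (.inr (k', i)) ∧ k' ≠ k := by
    intro k
    obtain ⟨c, hc⟩ := hsat k
    rcases c with k' | ⟨k', j⟩
    · have hk : k = k' := M.adj_sub hc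
      exact absurd (hk ▸ hc) (hhub k)
    · obtain ⟨rfl, hne⟩ : i = j ∧ k ≠ k' := M.adj_sub hc
      exact ⟨k', hc, hne.symm⟩
  choose f hf hf_ne using partner
  have hinv : Function.Involutive f := fun k => by
    simpa using hM.eq_of_adj_left (hf (f k)) (hf k).symm
  obtain ⟨k, hk⟩ := Fin.exists_apply_eq_self_of_involutive_three f hinv
  exact hf_ne k hk

noncomputable def unsaturated (M : (GGraph n).Subgraph) : Finset (Fin 3 × Fin n) :=
  univ.filter fun p => ∀ c, ¬ M.Adj (.inr p) c

theorem card_matchedToHub_le_one (hM : M.IsMatching) (k : Fin 3) :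
    (univ.filter fun i : Fin n => M.Adj (.inr (k, i)) (.inl k)).card ≤ 1 := by
  refine card_le_one.2 fun i hi j hj => ?_
  simp only [mem_filter, mem_univ, true_and] at hi hj
  simpa using hM.eq_of_adj_right hi hj

theorem le_card_unsaturated_add_three (hM : M.IsMatching) :
    n ≤ (unsaturated M).card + 3 := by
  have hcover : (univ : Finset (Fin n)) ⊆ (unsaturated M).image Prod.snd ∪
      univ.biUnion fun k => univ.filter fun i => M.Adj (.inr (k, i)) (.inl k) := by
    intro i _
    by_cases hsat : ∀ k, ∃ c, M.Adj (.inr (k, i)) c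
    · obtain ⟨k, hk⟩ := exists_adj_hub_of_forall_saturated hM i hsat
      exact mem_union_right _ (mem_biUnion.2 ⟨k, mem_univ _, by simpa using hk⟩)
    · obtain ⟨k, hk⟩ := not_forall.1 hsat
      have hki : (k, i) ∈ unsaturated M := by simpa [unsaturated] using not_exists.1 hk
      exact mem_union_left _ (mem_image.2 ⟨(k, i), hki, rfl⟩)
  calc n = (univ : Finset (Fin n)).card := by simp
    _ ≤ ((unsaturated M).image Prod.snd).card
        + (univ.biUnion fun k => univ.filter fun i => M.Adj (.inr (k, i)) (.inl k)).card :=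
      (card_le_card hcover).trans (card_union_le _ _)
    _ ≤ (unsaturated M).card + (univ : Finset (Fin 3)).card * 1 :=
      add_le_add card_image_le
        (card_biUnion_le_card_mul _ _ _ fun k _ => card_matchedToHub_le_one hM k)
    _ = (unsaturated M).card + 3 := by simp

theorem exists_unsaturated_ne_with_common_adj (hn : 7 ≤ n) (hM : M.IsMatching) :
    ∃ a b, a ≠ b ∧ (∀ c, ¬ M.Adj a c) ∧ (∀ c, ¬ M.Adj b c) ∧
      ∃ w, (GGraph n).Adj w a ∧ (GGraph n).Adj w b := by
  have hcard : (univ : Finset (Fin 3)).card < (unsaturated M).card := by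
    have := le_card_unsaturated_add_three hM
    simp only [card_univ, Fintype.card_fin]
    omega
  obtain ⟨p, hp, q, hq, hpq, hk⟩ :=
    exists_ne_map_eq_of_card_lt_of_maps_to hcard fun p _ => mem_univ p.1
  simp only [unsaturated, mem_filter, mem_univ, true_and] at hp hq
  exact ⟨.inr p, .inr q, fun h => hpq (Sum.inr_injective h), hp, hq, .inl p.1, rfl, hk.symm⟩

end GGraph

/-- For every maximum matching `M` of `G_{2r+1}` there exist two distinct
`M`-unsaturated vertices that have a common neighbor. -/
theorem stmt_10 (r : ℕ) (hr : 3 ≤ r) (M : (GGraph (2 * r + 1)).Subgraph)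
    (hM : (GGraph (2 * r + 1)).IsMaximumMatching M) :
    ∃ a b, a ≠ b ∧ (∀ c, ¬ M.Adj a c) ∧ (∀ c, ¬ M.Adj b c) ∧
      ∃ w, (GGraph (2 * r + 1)).Adj w a ∧ (GGraph (2 * r + 1)).Adj w b :=
  GGraph.exists_unsaturated_ne_with_common_adj (by omega) hM.1
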